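/- arXiv:2509.16969 — 5 statements merged into one kernel-verified Lean document; each statement's English description precedes it below -/
import Mathlib

section
/- If T is a normal bounded operator on a Hilbert space that is m-isometric for some m ≥ 1, then T is an isometry, and hence unitary. -/
/-!
Normality makes `T†` and `T` commute, so the defining sum is the binomial expansion of
`(T†T - 1)ᵐ`: the self-adjoint operator `T†T - 1` is nilpotent. A nilpotent self-adjoint element
of a C⋆-algebra vanishes, since `‖x ^ 2 ^ n‖ = ‖x‖ ^ 2 ^ n`. Hence `T†T = 1 = TT†`.
-/

open ContinuousLinearMap Finset

lemma IsSelfAdjoint.eq_zero_of_isNilpotent {E : Type*} [NormedRing E] [StarRing E] [CStarRing E]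
    {x : E} (hx : IsSelfAdjoint x) (hnil : IsNilpotent x) : x = 0 := by
  obtain ⟨m, hm⟩ := hnil
  have h : x ^ 2 ^ m = 0 := pow_eq_zero_of_le Nat.lt_two_pow_self.le hm
  rw [← norm_eq_zero, ← pow_eq_zero_iff (pow_ne_zero m two_ne_zero), ← hx.norm_pow_two_pow, h,
    norm_zero]

theorem Commute.mul_sub_one_pow {R A : Type*} [CommRing R] [Ring A] [Algebra R A] {a b : A}
    (h : Commute a b) (m : ℕ) :
    (a * b - 1) ^ m = ∑ k ∈ range (m + 1), ((-1 : R) ^ (m - k) * m.choose k) • (a ^ k * b ^ k) := by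
  rw [sub_eq_add_neg, (Commute.neg_one_right (a * b)).add_pow]
  refine sum_congr rfl fun k _ => ?_
  have hc : Commute ((-1) ^ (m - k) * (m.choose k : A)) ((a * b) ^ k) :=
    ((Commute.neg_one_left _).pow_left _).mul_left (Nat.cast_commute _ _)
  rw [Algebra.smul_def, map_mul, map_pow, map_neg, map_one, map_natCast, mul_assoc, ← hc.eq,
    h.mul_pow]

theorem stmt_6_general {H : Type*} [NormedAddCommGroup H] [InnerProductSpace ℂ H] [CompleteSpace H]
    (T : H →L[ℂ] H) (hnormal : adjoint T * T = T * adjoint T) (m : ℕ)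
    (hmiso : ∑ k ∈ range (m + 1),
      ((-1 : ℂ) ^ (m - k) * (m.choose k : ℂ)) • ((adjoint T) ^ k * T ^ k) = 0) :
    (∀ x : H, ‖T x‖ = ‖x‖) ∧ adjoint T * T = 1 ∧ T * adjoint T = 1 := by
  have hnil : IsNilpotent (adjoint T * T - 1) :=
    ⟨m, by rw [Commute.mul_sub_one_pow (R := ℂ) hnormal, hmiso]⟩
  have hsa : IsSelfAdjoint (adjoint T * T - 1) :=
    (IsSelfAdjoint.star_mul_self T).sub (IsSelfAdjoint.one _)
  have hiso : adjoint T * T = 1 := sub_eq_zero.mp (hsa.eq_zero_of_isNilpotent hnil)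
  exact ⟨(norm_map_iff_adjoint_comp_self T).mpr hiso, hiso, hnormal ▸ hiso⟩

/-- A normal bounded operator which is m-isometric for some m ≥ 1 is an isometry,
and hence unitary. -/
theorem stmt_6 {H : Type*} [NormedAddCommGroup H] [InnerProductSpace ℂ H] [CompleteSpace H]
    (T : H →L[ℂ] H) (hnormal : adjoint T * T = T * adjoint T) (m : ℕ) (hm : 1 ≤ m)
    (hmiso : ∑ k ∈ range (m + 1),
      ((-1 : ℂ) ^ (m - k) * (m.choose k : ℂ)) • ((adjoint T) ^ k * T ^ k) = 0) :
    (∀ x : H, ‖T x‖ = ‖x‖) ∧ adjoint T * T = 1 ∧ T * adjoint T = 1 :=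
  stmt_6_general T hnormal m hmiso
end

section
/- Let (X,F,μ) be a σ-finite measure space and u ∈ L^∞(μ). The multiplication operator M_u on L²(μ) is quasi-m-isometric (i.e., Σ_{k=0}^{m} (-1)^{m-k} C(m,k) (M_u*)^{k+1} (M_u)^{k+1} = 0) if and only if |u|²(|u|² - 1) = 0 μ-a.e., i.e., μ({x : u(x) ≠ 0} ∩ {x : |u(x)| ≠ 1}) = 0. -/
open ContinuousLinearMap Finset MeasureTheory

/-! Since `M ^ n` is multiplication by `u ^ n`, the quadratic form at `f` of the defect
`∑ₖ (-1) ^ (m - k) C(m, k) M* ^ (k + 1) M ^ (k + 1)` is `∫ |u|² (|u|² - 1) ^ m |f|²`.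
A complex operator vanishes iff its quadratic form does, and testing the weight against the
indicators of sets of finite measure (which exhaust `X` by σ-finiteness) shows that this happens
iff `|u|² (|u|² - 1) ^ m = 0` a.e., i.e. `|u|² (|u|² - 1) = 0` a.e. as `m ≥ 1`. -/

theorem sum_neg_one_pow_mul_choose_mul_pow_succ {R : Type*} [CommRing R] (t : R) (m : ℕ) :
    ∑ k ∈ range (m + 1), (-1 : R) ^ (m - k) * (m.choose k : R) * t ^ (k + 1) =
      t * (t - 1) ^ m := by
  rw [sub_pow, mul_sum]
  refine sum_congr rfl fun k hk => ?_
  have hk : k ≤ m := Nat.lt_succ_iff.mp (mem_range.mp hk)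
  have hsign : (-1 : R) ^ (m - k) = (-1) ^ (k + m) := by
    rw [show k + m = m - k + 2 * k by omega, pow_add, pow_mul, neg_one_sq, one_pow, mul_one]
  rw [hsign]
  ring

theorem mul_sub_one_pow_mul_eq_sum {R : Type*} [CommRing R] (t s : R) (m : ℕ) :
    t * (t - 1) ^ m * s =
      ∑ k ∈ range (m + 1), (-1 : R) ^ (m - k) * (m.choose k : R) * (t ^ (k + 1) * s) := by
  simp_rw [← sum_neg_one_pow_mul_choose_mul_pow_succ, sum_mul, mul_assoc]

noncomputable def quasiIsometryDefect {𝕜 E : Type*} [RCLike 𝕜] [NormedAddCommGroup E]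
    [InnerProductSpace 𝕜 E] [CompleteSpace E] (m : ℕ) (A : E →L[𝕜] E) : E →L[𝕜] E :=
  ∑ k ∈ range (m + 1),
    ((-1 : 𝕜) ^ (m - k) * (m.choose k : 𝕜)) • (adjoint A ^ (k + 1) * A ^ (k + 1))

section L2

variable {X : Type*} [MeasurableSpace X] {μ : Measure X} {𝕜 : Type*} [RCLike 𝕜]

theorem mul_norm_sq_indicatorConstLp_one_ae_eq (w : X → ℝ) {s : Set X} (hs : MeasurableSet s)
    (hμs : μ s ≠ ⊤) :
    (fun x => w x * ‖indicatorConstLp 2 hs hμs (1 : 𝕜) x‖ ^ 2) =ᵐ[μ] s.indicator w := by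
  filter_upwards [indicatorConstLp_coeFn (p := 2) (hs := hs) (hμs := hμs) (c := (1 : 𝕜))]
    with x hx
  by_cases hxs : x ∈ s <;> simp [hx, hxs]

theorem forall_integral_mul_norm_sq_eq_zero_iff [SigmaFinite μ] {w : X → ℝ}
    (hint : ∀ f : Lp 𝕜 2 μ, Integrable (fun x => w x * ‖f x‖ ^ 2) μ) :
    (∀ f : Lp 𝕜 2 μ, ∫ x, w x * ‖f x‖ ^ 2 ∂μ = 0) ↔ ∀ᵐ x ∂μ, w x = 0 := by
  refine ⟨fun hzero => ae_eq_zero_of_forall_setIntegral_eq_of_sigmaFinite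
    (fun s hs hμs => ?_) (fun s hs hμs => ?_), fun hw f => integral_eq_zero_of_ae ?_⟩
  · rw [← integrable_indicator_iff hs]
    exact (hint _).congr (mul_norm_sq_indicatorConstLp_one_ae_eq w hs hμs.ne (𝕜 := 𝕜))
  · rw [← integral_indicator hs, ← integral_congr_ae
      (mul_norm_sq_indicatorConstLp_one_ae_eq w hs hμs.ne (𝕜 := 𝕜))]
    exact hzero _
  · filter_upwards [hw] with x hx
    simp [hx]

section MultiplicationOperator

variable {u : X → 𝕜} {M : Lp 𝕜 2 μ →L[𝕜] Lp 𝕜 2 μ}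

theorem pow_apply_ae_eq_of_mul (hM : ∀ f : Lp 𝕜 2 μ, ⇑(M f) =ᵐ[μ] fun x => u x * f x)
    (n : ℕ) (f : Lp 𝕜 2 μ) : ⇑((M ^ n) f) =ᵐ[μ] fun x => u x ^ n * f x := by
  induction n with
  | zero => simp
  | succ n ih =>
    rw [pow_succ', mul_apply_eq_comp]
    filter_upwards [hM ((M ^ n) f), ih] with x hx hix
    rw [hx, hix]
    ring

theorem inner_adjoint_mul_self_apply (A : Lp 𝕜 2 μ →L[𝕜] Lp 𝕜 2 μ) (f : Lp 𝕜 2 μ) :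
    inner 𝕜 ((adjoint A * A) f) f = ((∫ x, ‖A f x‖ ^ 2 ∂μ : ℝ) : 𝕜) := by
  rw [mul_apply_eq_comp, adjoint_inner_left, L2.inner_def, ← integral_ofReal]
  refine integral_congr_ae (Filter.Eventually.of_forall fun x => ?_)
  simp [inner_self_eq_norm_sq_to_K]

theorem inner_adjoint_pow_mul_pow_apply
    (hM : ∀ f : Lp 𝕜 2 μ, ⇑(M f) =ᵐ[μ] fun x => u x * f x) (n : ℕ) (f : Lp 𝕜 2 μ) :
    inner 𝕜 ((adjoint M ^ n * M ^ n) f) f =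
      ((∫ x, (‖u x‖ ^ 2) ^ n * ‖f x‖ ^ 2 ∂μ : ℝ) : 𝕜) := by
  rw [← star_eq_adjoint, ← star_pow, star_eq_adjoint, inner_adjoint_mul_self_apply]
  congr 1
  refine integral_congr_ae ?_
  filter_upwards [pow_apply_ae_eq_of_mul hM n f] with x hx
  rw [hx, norm_mul, norm_pow]
  ring

theorem integrable_norm_sq_pow_mul_norm_sq
    (hM : ∀ f : Lp 𝕜 2 μ, ⇑(M f) =ᵐ[μ] fun x => u x * f x) (n : ℕ) (f : Lp 𝕜 2 μ) :
    Integrable (fun x => (‖u x‖ ^ 2) ^ n * ‖f x‖ ^ 2) μ := by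
  refine ((memLp_two_iff_integrable_sq_norm (Lp.aestronglyMeasurable _)).mp
    (Lp.memLp ((M ^ n) f))).congr ?_
  filter_upwards [pow_apply_ae_eq_of_mul hM n f] with x hx
  rw [hx, norm_mul, norm_pow]
  ring

theorem integrable_weight_mul_norm_sq
    (hM : ∀ f : Lp 𝕜 2 μ, ⇑(M f) =ᵐ[μ] fun x => u x * f x) (m : ℕ) (f : Lp 𝕜 2 μ) :
    Integrable (fun x => ‖u x‖ ^ 2 * (‖u x‖ ^ 2 - 1) ^ m * ‖f x‖ ^ 2) μ := by
  simp_rw [mul_sub_one_pow_mul_eq_sum]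
  exact integrable_finsetSum _ fun k _ =>
    (integrable_norm_sq_pow_mul_norm_sq hM (k + 1) f).const_mul _

theorem inner_quasiIsometryDefect_apply
    (hM : ∀ f : Lp 𝕜 2 μ, ⇑(M f) =ᵐ[μ] fun x => u x * f x) (m : ℕ) (f : Lp 𝕜 2 μ) :
    inner 𝕜 (quasiIsometryDefect m M f) f =
      ((∫ x, ‖u x‖ ^ 2 * (‖u x‖ ^ 2 - 1) ^ m * ‖f x‖ ^ 2 ∂μ : ℝ) : 𝕜) := by
  simp_rw [mul_sub_one_pow_mul_eq_sum]
  rw [integral_finsetSum _ fun k _ =>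
    (integrable_norm_sq_pow_mul_norm_sq hM (k + 1) f).const_mul _]
  simp_rw [integral_const_mul, quasiIsometryDefect, _root_.sum_apply, sum_inner, smul_apply,
    inner_smul_left, inner_adjoint_pow_mul_pow_apply hM]
  push_cast
  simp

end MultiplicationOperator

end L2

theorem sq_norm_mul_sq_norm_sub_one_eq_zero_iff {E : Type*} [NormedAddCommGroup E] (z : E) :
    ‖z‖ ^ 2 * (‖z‖ ^ 2 - 1) = 0 ↔ z = 0 ∨ ‖z‖ = 1 := by
  rw [mul_eq_zero, sub_eq_zero, pow_eq_one_iff_of_nonneg (norm_nonneg z) two_ne_zero,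
    sq_eq_zero_iff, norm_eq_zero]

/-- The multiplication operator M_u on L²(μ) is quasi-m-isometric iff
|u|²(|u|² - 1) = 0 μ-a.e., i.e. μ({u ≠ 0} ∩ {|u| ≠ 1}) = 0. -/
theorem stmt_8 {X : Type*} [MeasurableSpace X] (μ : Measure X) [SigmaFinite μ]
    (u : X → ℂ) (M : Lp ℂ 2 μ →L[ℂ] Lp ℂ 2 μ)
    (hM : ∀ f : Lp ℂ 2 μ, ⇑(M f) =ᵐ[μ] fun x => u x * f x)
    (m : ℕ) (hm : 1 ≤ m) :
    ((∑ k ∈ range (m + 1),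
        ((-1 : ℂ) ^ (m - k) * (m.choose k : ℂ)) •
          ((adjoint M) ^ (k + 1) * M ^ (k + 1)) = 0)
      ↔ (∀ᵐ x ∂μ, ‖u x‖ ^ 2 * (‖u x‖ ^ 2 - 1) = 0)) ∧
    ((∀ᵐ x ∂μ, ‖u x‖ ^ 2 * (‖u x‖ ^ 2 - 1) = 0)
      ↔ μ ({x | u x ≠ 0} ∩ {x | ‖u x‖ ≠ 1}) = 0) := by
  have hweight : (∀ᵐ x ∂μ, ‖u x‖ ^ 2 * (‖u x‖ ^ 2 - 1) ^ m = 0) ↔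
      ∀ᵐ x ∂μ, ‖u x‖ ^ 2 * (‖u x‖ ^ 2 - 1) = 0 :=
    Filter.eventually_congr (.of_forall fun x => by
      simp only [mul_eq_zero, pow_eq_zero_iff (Nat.one_le_iff_ne_zero.mp hm)])
  constructor
  · change quasiIsometryDefect m M = 0 ↔ _
    rw [← hweight,
      ← forall_integral_mul_norm_sq_eq_zero_iff (integrable_weight_mul_norm_sq hM m),
      ← coe_inj (f := quasiIsometryDefect m M) (g := 0), toLinearMap_zero,
      ← inner_map_self_eq_zero]
    simp only [coe_coe, inner_quasiIsometryDefect_apply hM, RCLike.ofReal_eq_zero]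
  · rw [ae_iff]
    simp only [sq_norm_mul_sq_norm_sub_one_eq_zero_iff, not_or, Set.ofPred_and]
end

section
/- Let W = M_u C_φ be a bounded weighted composition operator on L²(μ) with W*^n W^n = M_{J_n} for a sequence of nonnegative functions J_n (J_0 = 1). Then W is quasi-m-isometric if and only if G_m := Σ_{k=0}^{m} (-1)^{m-k} C(m,k) J_{k+1} = 0 μ-a.e., and W is m-isometric if and only if G_m^0 := Σ_{k=0}^{m} (-1)^{m-k} C(m,k) J_k = 0 μ-a.e. -/
open ContinuousLinearMap Finset MeasureTheory

/-! Each side of either equivalence is a linear combination of the operators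
`W*^k W^k = M_{J_k}`, so it is the multiplication operator by the same combination `G` of the
`J_k`; on a σ-finite space a multiplication operator vanishes exactly when its symbol vanishes
a.e., which is tested against indicators of sets of finite measure. -/

namespace MeasureTheory.Lp

variable {X : Type*} [MeasurableSpace X] {μ : Measure X} {p : ENNReal} [Fact (1 ≤ p)]

section NormedField

variable {𝕜 : Type*} [NormedField 𝕜]

def IsMulOperator (T : Lp 𝕜 p μ →L[𝕜] Lp 𝕜 p μ) (g : X → 𝕜) : Prop :=
  ∀ f : Lp 𝕜 p μ, ⇑(T f) =ᵐ[μ] fun x => g x * f x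

theorem IsMulOperator.finset_sum_smul {ι : Type*} (s : Finset ι) (c : ι → 𝕜)
    {T : ι → Lp 𝕜 p μ →L[𝕜] Lp 𝕜 p μ} {g : ι → X → 𝕜}
    (hT : ∀ i ∈ s, IsMulOperator (T i) (g i)) :
    IsMulOperator (∑ i ∈ s, c i • T i) fun x => ∑ i ∈ s, c i * g i x := by
  intro f
  have hterm : ∀ i ∈ s, ⇑((c i • T i) f) =ᵐ[μ] fun x => c i * (g i x * f x) := fun i hi => by
    filter_upwards [coeFn_smul (c i) (T i f), hT i hi f] with x hsmul hmul
    rw [smul_apply, hsmul, Pi.smul_apply, hmul, smul_eq_mul]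
  filter_upwards [coeFn_fun_finsetSum s fun i => (c i • T i) f,
    (Filter.eventually_all_finset s).2 hterm] with x hsum hterms
  rw [_root_.sum_apply, hsum, Finset.sum_mul]
  exact Finset.sum_congr rfl fun i hi => by rw [hterms i hi, mul_assoc]

theorem IsMulOperator.eq_zero_iff [SigmaFinite μ] {T : Lp 𝕜 p μ →L[𝕜] Lp 𝕜 p μ} {g : X → 𝕜}
    (hT : IsMulOperator T g) : T = 0 ↔ ∀ᵐ x ∂μ, g x = 0 := by
  constructor
  · rintro rfl
    refine ae_of_forall_measure_lt_top_ae_restrict _ fun s hs hμs => ?_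
    rw [ae_restrict_iff' hs]
    filter_upwards [hT (indicatorConstLp p hs hμs.ne 1), coeFn_zero 𝕜 p μ,
      indicatorConstLp_coeFn (p := p) (hs := hs) (hμs := hμs.ne) (c := (1 : 𝕜))]
      with x hmul hzero hind hx
    rw [zero_apply, hzero, hind, Set.indicator_of_mem hx, mul_one] at hmul
    exact hmul.symm
  · intro hg
    ext f
    filter_upwards [hT f, coeFn_zero 𝕜 p μ, hg] with x hmul hzero hgx
    rw [hmul, zero_apply, hzero, hgx, zero_mul, Pi.zero_apply]

end NormedField

theorem IsMulOperator.finset_sum_ofReal_smul_eq_zero_iff {𝕜 : Type*} [RCLike 𝕜] [SigmaFinite μ]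
    {ι : Type*} (s : Finset ι) (a : ι → ℝ) {T : ι → Lp 𝕜 p μ →L[𝕜] Lp 𝕜 p μ} {J : ι → X → ℝ}
    (hT : ∀ i ∈ s, IsMulOperator (T i) fun x => (J i x : 𝕜)) :
    ∑ i ∈ s, (a i : 𝕜) • T i = 0 ↔ ∀ᵐ x ∂μ, ∑ i ∈ s, a i * J i x = 0 := by
  rw [(IsMulOperator.finset_sum_smul s _ hT).eq_zero_iff]
  simp_rw [← RCLike.ofReal_mul, ← RCLike.ofReal_sum, RCLike.ofReal_eq_zero]

end MeasureTheory.Lp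

open Lp in
theorem stmt_11_general {X : Type*} [MeasurableSpace X] (μ : Measure X) [SigmaFinite μ]
    (W : Lp ℂ 2 μ →L[ℂ] Lp ℂ 2 μ) (J : ℕ → X → ℝ)
    (hW : ∀ (n : ℕ) (f : Lp ℂ 2 μ),
      ⇑(((adjoint W) ^ n * W ^ n) f) =ᵐ[μ] fun x => (J n x : ℂ) * f x)
    (m : ℕ) :
    ((∑ k ∈ range (m + 1),
        ((-1 : ℂ) ^ (m - k) * (m.choose k : ℂ)) •
          ((adjoint W) ^ (k + 1) * W ^ (k + 1)) = 0)
      ↔ (∀ᵐ x ∂μ,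
          ∑ k ∈ range (m + 1), (-1 : ℝ) ^ (m - k) * (m.choose k : ℝ) * J (k + 1) x = 0)) ∧
    ((∑ k ∈ range (m + 1),
        ((-1 : ℂ) ^ (m - k) * (m.choose k : ℂ)) • ((adjoint W) ^ k * W ^ k) = 0)
      ↔ (∀ᵐ x ∂μ,
          ∑ k ∈ range (m + 1), (-1 : ℝ) ^ (m - k) * (m.choose k : ℝ) * J k x = 0)) := by
  have hM (n : ℕ) : IsMulOperator (adjoint W ^ n * W ^ n) fun x => (J n x : ℂ) := hW n
  have key (σ : ℕ → ℕ) := IsMulOperator.finset_sum_ofReal_smul_eq_zero_iff (range (m + 1))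
    (fun k => (-1 : ℝ) ^ (m - k) * m.choose k) fun k _ => hM (σ k)
  push_cast at key
  exact ⟨key (· + 1), key id⟩

/-- For a bounded weighted composition operator W on L²(μ) with W*^n W^n = M_{J_n}
(J_0 = 1), W is quasi-m-isometric iff G_m = Σ (-1)^{m-k} C(m,k) J_{k+1} = 0 a.e.,
and m-isometric iff G_m^0 = Σ (-1)^{m-k} C(m,k) J_k = 0 a.e. -/
theorem stmt_11 {X : Type*} [MeasurableSpace X] (μ : Measure X) [SigmaFinite μ]
    (W : Lp ℂ 2 μ →L[ℂ] Lp ℂ 2 μ) (J : ℕ → X → ℝ)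
    (hJnn : ∀ n x, 0 ≤ J n x) (hJ0 : ∀ x, J 0 x = 1)
    (hW : ∀ (n : ℕ) (f : Lp ℂ 2 μ),
      ⇑(((adjoint W) ^ n * W ^ n) f) =ᵐ[μ] fun x => (J n x : ℂ) * f x)
    (m : ℕ) (hm : 1 ≤ m) :
    ((∑ k ∈ range (m + 1),
        ((-1 : ℂ) ^ (m - k) * (m.choose k : ℂ)) •
          ((adjoint W) ^ (k + 1) * W ^ (k + 1)) = 0)
      ↔ (∀ᵐ x ∂μ,
          ∑ k ∈ range (m + 1), (-1 : ℝ) ^ (m - k) * (m.choose k : ℝ) * J (k + 1) x = 0)) ∧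
    ((∑ k ∈ range (m + 1),
        ((-1 : ℂ) ^ (m - k) * (m.choose k : ℂ)) • ((adjoint W) ^ k * W ^ k) = 0)
      ↔ (∀ᵐ x ∂μ,
          ∑ k ∈ range (m + 1), (-1 : ℝ) ^ (m - k) * (m.choose k : ℝ) * J k x = 0)) :=
  stmt_11_general μ W J hW m
end

section
/- Let C_φ be a bounded normal composition operator on L²(μ) with C_φ*C_φ = M_h. Then C_φ is m-isometric if and only if (h-1)^m = 0 μ-a.e., if and only if h = 1 μ-a.e., if and only if C_φ is an isometry. -/
open ContinuousLinearMap Finset MeasureTheory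

/-!
By normality, `C†ᵏ Cᵏ = (C† C)ᵏ`, so the `m`-isometry defect `∑ (-1)^(m-k) (m choose k) C†ᵏ Cᵏ`
is `(C† C - 1)ᵐ`, the multiplication operator by `(h - 1)ᵐ`. On a σ-finite space a
multiplication operator vanishes iff its symbol vanishes a.e. (test it on indicators of the
finite-measure spanning sets), and `C` is an isometry iff `C† C = 1`, i.e. iff `h = 1` a.e.
-/

theorem sub_one_pow_eq_sum_smul {S R : Type*} [CommRing S] [Ring R] [Algebra S R] (x : R) (n : ℕ) :
    (x - 1) ^ n = ∑ k ∈ range (n + 1), ((-1 : S) ^ (n - k) * n.choose k) • x ^ k := by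
  rw [sub_eq_add_neg, (Commute.neg_one_right x).add_pow]
  refine sum_congr rfl fun k _ => ?_
  rw [Algebra.smul_def, Algebra.commutes]
  simp [mul_assoc]

namespace MeasureTheory.Lp

variable {X 𝕜 : Type*} [MeasurableSpace X] {μ : Measure X} [NormedRing 𝕜] {p : ENNReal}

theorem ae_eq_zero_of_forall_mul_ae_eq_zero [SigmaFinite μ] {g : X → 𝕜}
    (H : ∀ f : Lp 𝕜 p μ, (fun x => g x * f x) =ᵐ[μ] 0) : g =ᵐ[μ] 0 := by
  have hsets : ∀ n, ∀ᵐ x ∂μ, x ∈ spanningSets μ n → g x = 0 := fun n => by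
    let f : Lp 𝕜 p μ := indicatorConstLp p (measurableSet_spanningSets μ n)
      (measure_spanningSets_lt_top μ n).ne 1
    filter_upwards [H f, indicatorConstLp_coeFn (p := p) (μ := μ) (c := (1 : 𝕜))]
      with x hx hind hmem
    rwa [hind, Set.indicator_of_mem hmem, mul_one] at hx
  filter_upwards [ae_all_iff.2 hsets] with x hx
  exact hx _ (mem_spanningSetsIndex μ x)

variable [Fact (1 ≤ p)]

def IsMultiplicationBy (T : Lp 𝕜 p μ →L[𝕜] Lp 𝕜 p μ) (g : X → 𝕜) : Prop :=
  ∀ f, ⇑(T f) =ᵐ[μ] fun x => g x * f x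

namespace IsMultiplicationBy

variable {S T : Lp 𝕜 p μ →L[𝕜] Lp 𝕜 p μ} {a b g : X → 𝕜}

theorem one : IsMultiplicationBy (1 : Lp 𝕜 p μ →L[𝕜] Lp 𝕜 p μ) (1 : X → 𝕜) := fun f => by
  simp only [Pi.one_apply, one_mul]; rfl

theorem mul (hS : IsMultiplicationBy S a) (hT : IsMultiplicationBy T b) :
    IsMultiplicationBy (S * T) (a * b) := fun f => by
  filter_upwards [hS (T f), hT f] with x hSx hTx
  change ⇑(S (T f)) x = _
  simp only [hSx, hTx, Pi.mul_apply, mul_assoc]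

theorem sub (hS : IsMultiplicationBy S a) (hT : IsMultiplicationBy T b) :
    IsMultiplicationBy (S - T) (a - b) := fun f => by
  filter_upwards [Lp.coeFn_sub (S f) (T f), hS f, hT f] with x hx hSx hTx
  simp only [sub_apply, hx, Pi.sub_apply, hSx, hTx, sub_mul]

theorem pow (hT : IsMultiplicationBy T g) (n : ℕ) : IsMultiplicationBy (T ^ n) (g ^ n) := by
  induction n with
  | zero => simpa using one
  | succ n ih => simpa [pow_succ] using ih.mul hT

theorem eq_zero_iff [SigmaFinite μ] (hT : IsMultiplicationBy T g) : T = 0 ↔ g =ᵐ[μ] 0 := by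
  constructor
  · rintro rfl
    refine ae_eq_zero_of_forall_mul_ae_eq_zero (p := p) fun f => ?_
    filter_upwards [hT f, Lp.coeFn_zero 𝕜 p μ] with x hx h0
    simpa [← hx] using h0
  · intro hg
    ext f
    filter_upwards [hT f, hg, Lp.coeFn_zero 𝕜 p μ] with x hx hgx h0
    rw [zero_apply, h0, hx, hgx, Pi.zero_apply, zero_mul]

end IsMultiplicationBy

end MeasureTheory.Lp

/-- For a bounded normal composition operator C_φ on L²(μ) with C_φ*C_φ = M_h:
C_φ is m-isometric iff (h-1)^m = 0 a.e. iff h = 1 a.e. iff C_φ is an isometry. -/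
theorem stmt_13 {X : Type*} [MeasurableSpace X] (μ : Measure X) [SigmaFinite μ]
    (h : X → ℝ) (C : Lp ℂ 2 μ →L[ℂ] Lp ℂ 2 μ)
    (hnormal : adjoint C * C = C * adjoint C)
    (hC : ∀ f : Lp ℂ 2 μ, ⇑((adjoint C * C) f) =ᵐ[μ] fun x => (h x : ℂ) * f x)
    (m : ℕ) (hm : 1 ≤ m) :
    ((∑ k ∈ range (m + 1),
        ((-1 : ℂ) ^ (m - k) * (m.choose k : ℂ)) • ((adjoint C) ^ k * C ^ k) = 0)
      ↔ (∀ᵐ x ∂μ, (h x - 1) ^ m = 0)) ∧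
    ((∀ᵐ x ∂μ, (h x - 1) ^ m = 0) ↔ (∀ᵐ x ∂μ, h x = 1)) ∧
    ((∀ᵐ x ∂μ, h x = 1) ↔ (∀ f : Lp ℂ 2 μ, ‖C f‖ = ‖f‖)) := by
  have hM : Lp.IsMultiplicationBy (adjoint C * C - 1) (fun x => (h x : ℂ) - 1) :=
    Lp.IsMultiplicationBy.sub hC .one
  have hsum : ∑ k ∈ range (m + 1),
      ((-1 : ℂ) ^ (m - k) * (m.choose k : ℂ)) • ((adjoint C) ^ k * C ^ k) =
        (adjoint C * C - 1) ^ m := by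
    rw [sub_one_pow_eq_sum_smul (S := ℂ)]
    exact sum_congr rfl fun k _ => by rw [Commute.mul_pow hnormal k]
  refine ⟨?_, ?_, ?_⟩
  · rw [hsum, (hM.pow m).eq_zero_iff]
    refine Filter.eventually_congr (.of_forall fun x => ?_)
    simp only [Pi.pow_apply, Pi.zero_apply]
    norm_cast
  · refine Filter.eventually_congr (.of_forall fun x => ?_)
    rw [pow_eq_zero_iff (by omega), sub_eq_zero]
  · rw [norm_map_iff_adjoint_comp_self, ← ContinuousLinearMap.mul_def, ← sub_eq_zero,
      hM.eq_zero_iff]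
    refine Filter.eventually_congr (.of_forall fun x => ?_)
    simp only [Pi.zero_apply, sub_eq_zero]
    norm_cast
end

section
/- Let C_φ be a bounded normal composition operator on L²(μ). Then C_φ is quasi-m-isometric if and only if h(h-1)^m = 0 μ-a.e., if and only if h(h-1) = 0 μ-a.e., if and only if C_φ is quasi-isometric (C_φ*²C_φ² = C_φ*C_φ). -/
open ContinuousLinearMap Finset MeasureTheory
open scoped ENNReal

/-!
Normality gives `C*ᵏ Cᵏ = (C*C)ᵏ`, so with `A = C*C` the quasi-`m`-isometry defect
`∑ₖ (-1)^(m-k) (m choose k) C*ᵏ⁺¹ Cᵏ⁺¹` is `A (A - 1)ᵐ`, and quasi-isometry is `A (A - 1) = 0`.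
Since `A` is multiplication by `h`, `A (A - 1)ᵐ` is multiplication by `h (h - 1)ᵐ`, and on a
σ-finite space a multiplication operator vanishes iff its symbol vanishes a.e. (test it on
indicators of sets of finite measure). Finally `h (h - 1)ᵐ` and `h (h - 1)` have the same zeros.
-/

theorem mul_sub_one_pow_eq_sum {R A : Type*} [CommRing R] [Ring A] [Algebra R A] (a : A)
    (m : ℕ) :
    a * (a - 1) ^ m =
      ∑ k ∈ range (m + 1), ((-1 : R) ^ (m - k) * (m.choose k : R)) • a ^ (k + 1) := by
  rw [sub_eq_add_neg, (Commute.neg_one_right a).add_pow, mul_sum]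
  refine sum_congr rfl fun k _ => ?_
  rw [Algebra.smul_def, Algebra.commutes, map_mul, map_pow, map_neg, map_one, map_natCast,
    pow_succ', mul_assoc, mul_assoc]

namespace MeasureTheory.Lp

variable {X 𝕜 : Type*} [MeasurableSpace X] {μ : Measure X} [NormedField 𝕜]
  {p : ℝ≥0∞} [Fact (1 ≤ p)]

def ActsByMul (T : Lp 𝕜 p μ →L[𝕜] Lp 𝕜 p μ) (g : X → 𝕜) : Prop :=
  ∀ f : Lp 𝕜 p μ, ⇑(T f) =ᵐ[μ] g * ⇑f

namespace ActsByMul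

variable {T S : Lp 𝕜 p μ →L[𝕜] Lp 𝕜 p μ} {g g' : X → 𝕜}

theorem one : ActsByMul (1 : Lp 𝕜 p μ →L[𝕜] Lp 𝕜 p μ) 1 := fun f => by
  simp

theorem mul (hT : ActsByMul T g) (hS : ActsByMul S g') : ActsByMul (T * S) (g * g') :=
  fun f => by
    filter_upwards [hT (S f), hS f] with x hTx hSx
    simp [hTx, hSx, mul_assoc]

theorem sub (hT : ActsByMul T g) (hS : ActsByMul S g') : ActsByMul (T - S) (g - g') :=
  fun f => by
    rw [sub_apply]
    filter_upwards [Lp.coeFn_sub (T f) (S f), hT f, hS f] with x hx hTx hSx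
    simp only [hx, Pi.sub_apply, hTx, hSx, Pi.mul_apply, sub_mul]

theorem pow (hT : ActsByMul T g) (n : ℕ) : ActsByMul (T ^ n) (g ^ n) := by
  induction n with
  | zero => simpa using one
  | succ n ih => simpa [pow_succ] using ih.mul hT

theorem ae_eq_zero_of_eq_zero [SigmaFinite μ] (hT : ActsByMul T g) (h0 : T = 0) :
    g =ᵐ[μ] 0 := by
  refine ae_of_forall_measure_lt_top_ae_restrict _ fun s hs hμs => ?_
  have h1 := hT (indicatorConstLp p hs hμs.ne 1)
  rw [h0, zero_apply] at h1
  rw [ae_restrict_iff' hs]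
  filter_upwards [h1, Lp.coeFn_zero 𝕜 p μ,
    indicatorConstLp_coeFn (hs := hs) (hμs := hμs.ne) (c := (1 : 𝕜))] with x h1x h0x hix hxs
  rw [h0x, Pi.mul_apply, hix, Set.indicator_of_mem hxs, mul_one] at h1x
  exact h1x.symm

theorem eq_zero_iff [SigmaFinite μ] (hT : ActsByMul T g) : T = 0 ↔ g =ᵐ[μ] 0 := by
  refine ⟨hT.ae_eq_zero_of_eq_zero, fun hg => ContinuousLinearMap.ext fun f => ?_⟩
  rw [zero_apply, Lp.eq_zero_iff_ae_eq_zero]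
  filter_upwards [hT f, hg] with x hTx hgx
  simp [hTx, hgx]

end ActsByMul

end MeasureTheory.Lp

/-- For a bounded normal composition operator C_φ on L²(μ) with C_φ*C_φ = M_h:
C_φ is quasi-m-isometric iff h(h-1)^m = 0 a.e. iff h(h-1) = 0 a.e. iff C_φ is
quasi-isometric (C_φ*²C_φ² = C_φ*C_φ). -/
theorem stmt_14 {X : Type*} [MeasurableSpace X] (μ : Measure X) [SigmaFinite μ]
    (h : X → ℝ) (C : Lp ℂ 2 μ →L[ℂ] Lp ℂ 2 μ)
    (hnormal : adjoint C * C = C * adjoint C)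
    (hC : ∀ f : Lp ℂ 2 μ, ⇑((adjoint C * C) f) =ᵐ[μ] fun x => (h x : ℂ) * f x)
    (m : ℕ) (hm : 1 ≤ m) :
    ((∑ k ∈ range (m + 1),
        ((-1 : ℂ) ^ (m - k) * (m.choose k : ℂ)) •
          ((adjoint C) ^ (k + 1) * C ^ (k + 1)) = 0)
      ↔ (∀ᵐ x ∂μ, h x * (h x - 1) ^ m = 0)) ∧
    ((∀ᵐ x ∂μ, h x * (h x - 1) ^ m = 0) ↔ (∀ᵐ x ∂μ, h x * (h x - 1) = 0)) ∧
    ((∀ᵐ x ∂μ, h x * (h x - 1) = 0)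
      ↔ (adjoint C) ^ 2 * C ^ 2 = adjoint C * C) := by
  set A := adjoint C * C
  have hA : Lp.ActsByMul A fun x => (h x : ℂ) := hC
  have hpow (n : ℕ) : adjoint C ^ n * C ^ n = A ^ n := (Commute.mul_pow hnormal n).symm
  have hzero_iff (n : ℕ) : A * (A - 1) ^ n = 0 ↔ ∀ᵐ x ∂μ, h x * (h x - 1) ^ n = 0 := by
    rw [(hA.mul ((hA.sub .one).pow n)).eq_zero_iff]
    refine Filter.eventually_congr (.of_forall fun x => ?_)
    simp only [Pi.mul_apply, Pi.pow_apply, Pi.sub_apply, Pi.one_apply, Pi.zero_apply]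
    norm_cast
  refine ⟨?_, ?_, ?_⟩
  · simp_rw [hpow, ← mul_sub_one_pow_eq_sum, hzero_iff]
  · exact Filter.eventually_congr (.of_forall fun x => by simp [Nat.one_le_iff_ne_zero.mp hm])
  · rw [hpow, ← sub_eq_zero, sq, ← mul_sub_one, ← pow_one (A - 1), hzero_iff 1]
    simp only [pow_one]
end
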